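/- Let g be a real Lie algebra with a hypercomplex structure (I,J,K) and Obata connection ∇, and let α ∈ g* be a nonzero ∇-parallel 1-form. Set Σ_α := ker α ∩ ker(α∘I) ∩ ker(α∘J) ∩ ker(α∘K). Then Σ_α is a Lie ideal of g, is invariant under I, J, and K, contains H[g,g], and is a proper subspace of g. -/

import Mathlib

open Submodule

section Hyper

variable {L : Type*} [LieRing L] [LieAlgebra ℝ L]

/-- A complex structure operator on a real Lie algebra: `I² = -id` and the integrability
identity `[IX,IY] = [X,Y] + I[IX,Y] + I[X,IY]` (equivalent to `g^{1,0}` being a subalgebra). -/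
def IsComplexStructureOp (I : L →ₗ[ℝ] L) : Prop :=
  (∀ x, I (I x) = -x) ∧ ∀ x y : L, ⁅I x, I y⁆ = ⁅x, y⁆ + I ⁅I x, y⁆ + I ⁅x, I y⁆

/-- A hypercomplex structure: a triple of complex structure operators with `IJ = K`
(together with `I² = J² = K² = -id` this gives the quaternionic relations). -/
structure IsHypercomplex (I J K : L →ₗ[ℝ] L) : Prop where
  hI : IsComplexStructureOp I
  hJ : IsComplexStructureOp J
  hK : IsComplexStructureOp K
  hIJ : ∀ x, I (J x) = K x

/-- The Obata connection `∇_X` as an endomorphism of `L`: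
`∇_X Y = ½([X,Y] + I[IX,Y] − J[X,JY] + K[IX,JY])`. -/
noncomputable def obataOp (I J K : L →ₗ[ℝ] L) (X : L) : Module.End ℝ L :=
  (1/2 : ℝ) • (LieAlgebra.ad ℝ L X + I ∘ₗ LieAlgebra.ad ℝ L (I X)
    - J ∘ₗ LieAlgebra.ad ℝ L X ∘ₗ J + K ∘ₗ LieAlgebra.ad ℝ L (I X) ∘ₗ J)

/-- Flatness of the Obata connection. -/
def ObataFlat (I J K : L →ₗ[ℝ] L) : Prop :=
  ∀ X Y Z : L, obataOp I J K X (obataOp I J K Y Z) - obataOp I J K Y (obataOp I J K X Z)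
    = obataOp I J K ⁅X, Y⁆ Z

/-- The set of brackets of elements of a subspace `W`. -/
def bracketSet (W : Submodule ℝ L) : Set L := {z : L | ∃ x ∈ W, ∃ y ∈ W, z = ⁅x, y⁆}

/-- `H[W,W] = span([W,W] ∪ I[W,W] ∪ J[W,W] ∪ K[W,W])`. -/
def Hbr (I J K : L →ₗ[ℝ] L) (W : Submodule ℝ L) : Submodule ℝ L :=
  span ℝ (bracketSet W ∪ I '' bracketSet W ∪ J '' bracketSet W ∪ K '' bracketSet W)

/-- The descending series `g_0^H = g`, `g_i^H = H[g_{i-1}^H, g_{i-1}^H]`. -/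
def gH (I J K : L →ₗ[ℝ] L) : ℕ → Submodule ℝ L
  | 0 => ⊤
  | i + 1 => Hbr I J K (gH I J K i)

end Hyper


section SigmaAux


/-!
A parallel form kills everything the Obata connection produces. As `∇` is torsion-free,
`⁅X, Y⁆ = ∇_X Y - ∇_Y X`, and as `I`, `J`, `K` are `∇`-parallel,
`T ⁅X, Y⁆ = ∇_X (T Y) - ∇_Y (T X)` for `T = I, J, K`; hence `α` and `α ∘ T` vanish on all
brackets, i.e. `[g, g] ⊆ Σ_α`. The quaternionic relations make `Σ_α` stable under `I`, `J`, `K`,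
so it contains `H[g, g]` and is an ideal, while `Σ_α ⊆ ker α ≠ g`.
-/

namespace IsHypercomplex

variable {L : Type*} [LieRing L] [LieAlgebra ℝ L] {I J K : L →ₗ[ℝ] L}

lemma J_K_apply (h : IsHypercomplex I J K) (x : L) : J (K x) = I x := by
  have hK2 : I (J (K x)) = -x := by rw [h.hIJ]; exact h.hK.1 x
  simpa [h.hI.1] using congrArg I hK2

lemma J_I_apply (h : IsHypercomplex I J K) (x : L) : J (I x) = -K x := by
  rw [← h.J_K_apply, h.hJ.1]

lemma I_K_apply (h : IsHypercomplex I J K) (x : L) : I (K x) = -J x := by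
  rw [← h.hIJ, h.hI.1]

lemma K_I_apply (h : IsHypercomplex I J K) (x : L) : K (I x) = J x := by
  rw [← h.hIJ, h.J_I_apply, map_neg, h.I_K_apply, neg_neg]

lemma K_J_apply (h : IsHypercomplex I J K) (x : L) : K (J x) = -I x := by
  rw [← h.hIJ, h.hJ.1, map_neg]

end IsHypercomplex

section Obata

variable {L : Type*} [LieRing L] [LieAlgebra ℝ L] {I J K : L →ₗ[ℝ] L}

lemma obataOp_apply (I J K : L →ₗ[ℝ] L) (X Y : L) :
    obataOp I J K X Y
      = (1/2 : ℝ) • (⁅X, Y⁆ + I ⁅I X, Y⁆ - J ⁅X, J Y⁆ + K ⁅I X, J Y⁆) := by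
  simp only [obataOp, LinearMap.smul_apply, LinearMap.add_apply, LinearMap.sub_apply,
    LinearMap.coe_comp, Function.comp_apply, LieAlgebra.ad_apply]

lemma obataOp_sub_obataOp_swap (h : IsHypercomplex I J K) (X Y : L) :
    obataOp I J K X Y - obataOp I J K Y X = ⁅X, Y⁆ := by
  have skew : ∀ (T : L →ₗ[ℝ] L) (u v : L), T ⁅u, v⁆ = -T ⁅v, u⁆ := fun T u v => by
    rw [← map_neg, lie_skew]
  have intJ := h.hJ.2 X Y
  have intK := h.hK.2 X Y
  have intI := h.hI.2 (J X) (J Y)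
  simp only [h.hIJ] at intI
  have intJ_IX := congrArg I (h.hJ.2 (I X) Y)
  simp only [h.J_I_apply, neg_lie, map_neg, map_add, h.hIJ] at intJ_IX
  have intJ_IY := congrArg I (h.hJ.2 (I Y) X)
  simp only [h.J_I_apply, neg_lie, map_neg, map_add, h.hIJ] at intJ_IY
  rw [obataOp_apply, obataOp_apply]
  -- the torsion of `∇` is a combination of the integrability conditions of `I`, `J`, `K`
  linear_combination (norm := module) (1/2 : ℝ) • intJ - (1/2 : ℝ) • intK + (1/2 : ℝ) • intI
    - (1/2 : ℝ) • intJ_IX + (1/2 : ℝ) • intJ_IY - (1/2 : ℝ) • skew LinearMap.id Y X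
    + (1/2 : ℝ) • skew J Y (J X) + (1/2 : ℝ) • skew I (K Y) (J X) - (1/2 : ℝ) • skew K (K Y) X

lemma obataOp_apply_I (h : IsHypercomplex I J K) (X Y : L) :
    obataOp I J K X (I Y) = I (obataOp I J K X Y) := by
  have intI := congrArg I (h.hI.2 X Y)
  simp only [map_add, h.hI.1] at intI
  have intI_JY := congrArg K (h.hI.2 X (J Y))
  simp only [map_add, h.hIJ, h.K_I_apply] at intI_JY
  rw [obataOp_apply, obataOp_apply, map_smul]
  simp only [map_add, map_sub, h.J_I_apply, lie_neg, map_neg, h.hIJ, h.I_K_apply, h.hI.1]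
  linear_combination (norm := module) (1/2 : ℝ) • intI - (1/2 : ℝ) • intI_JY

lemma obataOp_apply_J (h : IsHypercomplex I J K) (X Y : L) :
    obataOp I J K X (J Y) = J (obataOp I J K X Y) := by
  rw [obataOp_apply, obataOp_apply, map_smul]
  simp only [map_add, map_sub, h.hJ.1, lie_neg, map_neg, h.J_I_apply, h.J_K_apply]
  module

lemma obataOp_apply_K (h : IsHypercomplex I J K) (X Y : L) :
    obataOp I J K X (K Y) = K (obataOp I J K X Y) := by
  rw [← h.hIJ, obataOp_apply_I h, obataOp_apply_J h, h.hIJ]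

lemma obataOp_sub_obataOp_swap_of_parallel (h : IsHypercomplex I J K) {T : L →ₗ[ℝ] L}
    (hT : ∀ X Y, obataOp I J K X (T Y) = T (obataOp I J K X Y)) (X Y : L) :
    obataOp I J K X (T Y) - obataOp I J K Y (T X) = T ⁅X, Y⁆ := by
  rw [hT, hT, ← map_sub, obataOp_sub_obataOp_swap h]

lemma apply_map_lie_eq_zero_of_parallel (h : IsHypercomplex I J K) {α : L →ₗ[ℝ] ℝ}
    (hpar : ∀ X Y, α (obataOp I J K X Y) = 0) {T : L →ₗ[ℝ] L}
    (hT : ∀ X Y, obataOp I J K X (T Y) = T (obataOp I J K X Y)) (X Y : L) :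
    α (T ⁅X, Y⁆) = 0 := by
  rw [← obataOp_sub_obataOp_swap_of_parallel h hT, map_sub, hpar, hpar, sub_zero]

end Obata

section HyperKer

variable {L : Type*} [LieRing L] [LieAlgebra ℝ L] {I J K : L →ₗ[ℝ] L}

/-- The paper's `Σ_α`. -/
def hyperKer (I J K : L →ₗ[ℝ] L) (α : L →ₗ[ℝ] ℝ) : Submodule ℝ L :=
  LinearMap.ker α ⊓ LinearMap.ker (α ∘ₗ I) ⊓ LinearMap.ker (α ∘ₗ J) ⊓ LinearMap.ker (α ∘ₗ K)

lemma mem_hyperKer {α : L →ₗ[ℝ] ℝ} {y : L} :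
    y ∈ hyperKer I J K α ↔ α y = 0 ∧ α (I y) = 0 ∧ α (J y) = 0 ∧ α (K y) = 0 := by
  simp only [hyperKer, Submodule.mem_inf, LinearMap.mem_ker, LinearMap.coe_comp,
    Function.comp_apply, and_assoc]

lemma hyperKer_lt_top {α : L →ₗ[ℝ] ℝ} (hα : α ≠ 0) : hyperKer I J K α < ⊤ :=
  lt_of_le_of_lt (inf_le_left.trans (inf_le_left.trans inf_le_left))
    (lt_top_iff_ne_top.2 (mt LinearMap.ker_eq_top.1 hα))

variable (h : IsHypercomplex I J K) {α : L →ₗ[ℝ] ℝ}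
include h

lemma IsHypercomplex.I_mem_hyperKer {y : L} (hy : y ∈ hyperKer I J K α) :
    I y ∈ hyperKer I J K α := by
  obtain ⟨h1, hI, hJ, hK⟩ := mem_hyperKer.1 hy
  refine mem_hyperKer.2 ⟨hI, ?_, ?_, ?_⟩ <;>
    simp [h.hI.1, h.J_I_apply, h.K_I_apply, h1, hJ, hK]

lemma IsHypercomplex.J_mem_hyperKer {y : L} (hy : y ∈ hyperKer I J K α) :
    J y ∈ hyperKer I J K α := by
  obtain ⟨h1, hI, hJ, hK⟩ := mem_hyperKer.1 hy
  refine mem_hyperKer.2 ⟨hJ, ?_, ?_, ?_⟩ <;>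
    simp [h.hIJ, h.hJ.1, h.K_J_apply, h1, hI, hK]

lemma IsHypercomplex.K_mem_hyperKer {y : L} (hy : y ∈ hyperKer I J K α) :
    K y ∈ hyperKer I J K α := by
  obtain ⟨h1, hI, hJ, hK⟩ := mem_hyperKer.1 hy
  refine mem_hyperKer.2 ⟨hK, ?_, ?_, ?_⟩ <;>
    simp [h.I_K_apply, h.J_K_apply, h.hK.1, h1, hI, hJ]

lemma lie_mem_hyperKer (hpar : ∀ X Y, α (obataOp I J K X Y) = 0) (X Y : L) :
    ⁅X, Y⁆ ∈ hyperKer I J K α :=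
  mem_hyperKer.2 ⟨apply_map_lie_eq_zero_of_parallel (T := LinearMap.id) h hpar
      (fun _ _ => rfl) X Y,
    apply_map_lie_eq_zero_of_parallel h hpar (obataOp_apply_I h) X Y,
    apply_map_lie_eq_zero_of_parallel h hpar (obataOp_apply_J h) X Y,
    apply_map_lie_eq_zero_of_parallel h hpar (obataOp_apply_K h) X Y⟩

lemma Hbr_top_le_hyperKer (hpar : ∀ X Y, α (obataOp I J K X Y) = 0) :
    Hbr I J K ⊤ ≤ hyperKer I J K α := by
  refine Submodule.span_le.2 ?_
  rintro _ (((⟨X, -, Y, -, rfl⟩ | ⟨_, ⟨X, -, Y, -, rfl⟩, rfl⟩) |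
    ⟨_, ⟨X, -, Y, -, rfl⟩, rfl⟩) | ⟨_, ⟨X, -, Y, -, rfl⟩, rfl⟩)
  · exact lie_mem_hyperKer h hpar X Y
  · exact h.I_mem_hyperKer (lie_mem_hyperKer h hpar X Y)
  · exact h.J_mem_hyperKer (lie_mem_hyperKer h hpar X Y)
  · exact h.K_mem_hyperKer (lie_mem_hyperKer h hpar X Y)

end HyperKer

/-- for a nonzero Obata-parallel 1-form `α`, the subspace
`Σ_α = ker α ∩ ker(α∘I) ∩ ker(α∘J) ∩ ker(α∘K)` is a Lie ideal, is `I`, `J`, `K`-invariant,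
contains `H[g,g]`, and is proper. -/
theorem sigma_alpha_properties {L : Type*} [LieRing L] [LieAlgebra ℝ L]
    (I J K : L →ₗ[ℝ] L) (h : IsHypercomplex I J K)
    (α : L →ₗ[ℝ] ℝ) (hα : α ≠ 0) (hpar : ∀ X Y : L, α (obataOp I J K X Y) = 0) :
    (∀ (x : L), ∀ y ∈ LinearMap.ker α ⊓ LinearMap.ker (α ∘ₗ I) ⊓ LinearMap.ker (α ∘ₗ J)
        ⊓ LinearMap.ker (α ∘ₗ K),
      ⁅x, y⁆ ∈ LinearMap.ker α ⊓ LinearMap.ker (α ∘ₗ I) ⊓ LinearMap.ker (α ∘ₗ J)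
        ⊓ LinearMap.ker (α ∘ₗ K)) ∧
    (∀ y ∈ LinearMap.ker α ⊓ LinearMap.ker (α ∘ₗ I) ⊓ LinearMap.ker (α ∘ₗ J)
        ⊓ LinearMap.ker (α ∘ₗ K),
      I y ∈ LinearMap.ker α ⊓ LinearMap.ker (α ∘ₗ I) ⊓ LinearMap.ker (α ∘ₗ J)
        ⊓ LinearMap.ker (α ∘ₗ K)) ∧
    (∀ y ∈ LinearMap.ker α ⊓ LinearMap.ker (α ∘ₗ I) ⊓ LinearMap.ker (α ∘ₗ J)
        ⊓ LinearMap.ker (α ∘ₗ K),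
      J y ∈ LinearMap.ker α ⊓ LinearMap.ker (α ∘ₗ I) ⊓ LinearMap.ker (α ∘ₗ J)
        ⊓ LinearMap.ker (α ∘ₗ K)) ∧
    (∀ y ∈ LinearMap.ker α ⊓ LinearMap.ker (α ∘ₗ I) ⊓ LinearMap.ker (α ∘ₗ J)
        ⊓ LinearMap.ker (α ∘ₗ K),
      K y ∈ LinearMap.ker α ⊓ LinearMap.ker (α ∘ₗ I) ⊓ LinearMap.ker (α ∘ₗ J)
        ⊓ LinearMap.ker (α ∘ₗ K)) ∧
    Hbr I J K ⊤ ≤ LinearMap.ker α ⊓ LinearMap.ker (α ∘ₗ I) ⊓ LinearMap.ker (α ∘ₗ J)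
        ⊓ LinearMap.ker (α ∘ₗ K) ∧
    LinearMap.ker α ⊓ LinearMap.ker (α ∘ₗ I) ⊓ LinearMap.ker (α ∘ₗ J)
        ⊓ LinearMap.ker (α ∘ₗ K) < ⊤ :=
  ⟨fun x y _ => lie_mem_hyperKer h hpar x y, fun _ => h.I_mem_hyperKer,
    fun _ => h.J_mem_hyperKer, fun _ => h.K_mem_hyperKer, Hbr_top_le_hyperKer h hpar,
    hyperKer_lt_top hα⟩
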